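/- Quadratic remainder bound (Lemma on smooth nonlinearity bounders, scalar component): let g : ℝᵐ → ℝ be twice continuously differentiable, q ∈ ℝᵐ, Q ∈ 𝕊₊^m, S ∈ ℝ^{m×m} invertible, and D ⊆ ℝᵐ a convex set containing the ellipsoid E(q,Q). Suppose F̄ ≥ ‖(∂²g/∂y²)(y) · S‖_F for all y ∈ D. Then for every y ∈ E(q,Q), the Taylor remainder n(y−q) := g(y) − g(q) − ∇g(q)ᵀ(y−q) satisfies |n(y−q)| ≤ (1/2) F̄ ‖S⁻¹ Q‖_F. -/

import Mathlib

open Matrix MeasureTheory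

noncomputable def ellipsoid {m : ℕ} {Q : Matrix (Fin m) (Fin m) ℝ}
    (q : Fin m → ℝ) (hQ : Q.PosSemidef) : Set (Fin m → ℝ) :=
  {x | ∃ v : Fin m → ℝ, v ⬝ᵥ v ≤ 1 ∧ x = q + ((hQ.1.eigenvectorUnitary : Matrix (Fin m) (Fin m) ℝ) *
    diagonal ((RCLike.ofReal : ℝ → ℝ) ∘ (√·) ∘ hQ.1.eigenvalues) *
    (star (hQ.1.eigenvectorUnitary : Matrix (Fin m) (Fin m) ℝ))).mulVec v}

noncomputable def frob {p q : ℕ} (M : Matrix (Fin p) (Fin q) ℝ) : ℝ :=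
  Real.sqrt (Matrix.trace (Mᵀ * M))

noncomputable def hess {m : ℕ} (g : (Fin m → ℝ) → ℝ) (y : Fin m → ℝ) :
    Matrix (Fin m) (Fin m) ℝ :=
  Matrix.of fun i j => fderiv ℝ (fun z => fderiv ℝ g z (Pi.single j 1)) y (Pi.single i 1)

/-!
Along the segment from `q` to `y = q + R v`, with `R = Q^{1/2}` and `vᵀv ≤ 1`, the remainder is the
Lagrange remainder of a function of one variable, so it is at most half the supremum of
`|δᵀ H(ξ) δ|` over the segment, `δ = R v`. Since `R` and the Hessian `H` are symmetric,
`δᵀ H δ = vᵀ (R H R) v ≤ ‖R H R‖_F` and `‖R H R‖_F² = tr ((H Q)²) ≤ ‖H Q‖_F²`; finally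
`H Q = (H S)(S⁻¹ Q)` and the Frobenius norm is submultiplicative.
-/

open scoped Matrix.Norms.Frobenius

namespace Matrix

variable {l n : Type*} [Fintype l] [Fintype n]

lemma trace_transpose_mul_self (M : Matrix l n ℝ) : trace (Mᵀ * M) = ∑ i, ∑ j, M i j ^ 2 := by
  simp only [trace, diag, mul_apply, transpose_apply, sq]
  exact Finset.sum_comm

lemma frobenius_norm_sq_eq_trace (M : Matrix l n ℝ) : ‖M‖ ^ 2 = trace (Mᵀ * M) := by
  rw [frobenius_norm_def, ← Real.rpow_natCast, ← Real.rpow_mul (by positivity)]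
  simp [trace_transpose_mul_self]

lemma abs_apply_le_frobenius_norm (A : Matrix l n ℝ) (i : l) (j : n) : |A i j| ≤ ‖A‖ := by
  refine (pow_le_pow_iff_left₀ (abs_nonneg _) (norm_nonneg _) two_ne_zero).mp ?_
  rw [sq_abs, frobenius_norm_sq_eq_trace, trace_transpose_mul_self]
  exact (Finset.single_le_sum (f := fun j => A i j ^ 2) (fun _ _ => sq_nonneg _)
    (Finset.mem_univ j)).trans (Finset.single_le_sum (f := fun i => ∑ j, A i j ^ 2)
      (fun _ _ => by positivity) (Finset.mem_univ i))

lemma trace_mul_self_le_frobenius_norm_sq (P : Matrix n n ℝ) : trace (P * P) ≤ ‖P‖ ^ 2 := by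
  rw [frobenius_norm_sq_eq_trace, trace_transpose_mul_self]
  calc trace (P * P) = ∑ i, ∑ j, P i j * P j i := by simp [trace, mul_apply]
    _ ≤ ∑ i, ∑ j, (P i j ^ 2 / 2 + P j i ^ 2 / 2) :=
        Finset.sum_le_sum fun i _ => Finset.sum_le_sum fun j _ => by
          nlinarith [sq_nonneg (P i j - P j i)]
    _ = ∑ i, ∑ j, P i j ^ 2 := by
        simp only [Finset.sum_add_distrib]
        rw [Finset.sum_comm (f := fun i j => P j i ^ 2 / 2), ← Finset.sum_add_distrib]
        simp only [← Finset.sum_add_distrib, add_halves]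

lemma abs_dotProduct_mulVec_le_frobenius_norm (M : Matrix n n ℝ) {v : n → ℝ}
    (hv : v ⬝ᵥ v ≤ 1) : |v ⬝ᵥ M *ᵥ v| ≤ ‖M‖ := by
  have hentry : v ⬝ᵥ M *ᵥ v = (replicateRow Unit v * M * replicateCol Unit v) () () := by
    simp only [mul_apply, replicateRow_apply, replicateCol_apply, dotProduct, mulVec,
      Finset.mul_sum, Finset.sum_mul]
    rw [Finset.sum_comm]
    exact Finset.sum_congr rfl fun _ _ => Finset.sum_congr rfl fun _ _ => by ring
  have hv' : ‖WithLp.toLp 2 v‖ ≤ 1 := by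
    rw [EuclideanSpace.norm_eq, Real.sqrt_le_one]
    simpa [dotProduct, sq] using hv
  calc |v ⬝ᵥ M *ᵥ v| ≤ ‖replicateRow Unit v * M * replicateCol Unit v‖ := by
        rw [hentry]; exact abs_apply_le_frobenius_norm _ _ _
    _ ≤ ‖replicateRow Unit v‖ * ‖M‖ * ‖replicateCol Unit v‖ :=
        (frobenius_norm_mul _ _).trans
          (mul_le_mul_of_nonneg_right (frobenius_norm_mul _ _) (norm_nonneg _))
    _ ≤ ‖M‖ := by
        rw [frobenius_norm_replicateRow, frobenius_norm_replicateCol, mul_right_comm, ← sq]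
        exact mul_le_of_le_one_left (norm_nonneg M) (pow_le_one₀ (norm_nonneg _) hv')

lemma frobenius_norm_mul_mul_le {H R : Matrix n n ℝ} (hH : Hᵀ = H) (hR : Rᵀ = R) :
    ‖R * H * R‖ ≤ ‖H * (R * R)‖ := by
  refine (pow_le_pow_iff_left₀ (norm_nonneg _) (norm_nonneg _) two_ne_zero).mp ?_
  calc ‖R * H * R‖ ^ 2 = trace (R * (H * (R * R) * H * R)) := by
        rw [frobenius_norm_sq_eq_trace, transpose_mul, transpose_mul, hH, hR]
        simp only [Matrix.mul_assoc]
    _ = trace (H * (R * R) * (H * (R * R))) := by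
        rw [trace_mul_comm]; simp only [Matrix.mul_assoc]
    _ ≤ ‖H * (R * R)‖ ^ 2 := trace_mul_self_le_frobenius_norm_sq _

variable [DecidableEq n]

lemma cfc_sqrt_mul_self {Q : Matrix n n ℝ} (hQ : Q.PosSemidef) :
    cfc Real.sqrt Q * cfc Real.sqrt Q = Q := by
  rw [← cfc_mul Real.sqrt Real.sqrt Q]
  conv_rhs => rw [← cfc_id' ℝ Q hQ.1.isSelfAdjoint]
  refine cfc_congr fun x hx => ?_
  exact Real.mul_self_sqrt (by
    rw [hQ.1.spectrum_real_eq_range_eigenvalues] at hx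
    obtain ⟨i, rfl⟩ := hx
    exact hQ.eigenvalues_nonneg i)

lemma transpose_cfc (Q : Matrix n n ℝ) (f : ℝ → ℝ) : (cfc f Q)ᵀ = cfc f Q := by
  have : IsSelfAdjoint (cfc f Q) := cfc_predicate f Q
  simpa [IsSelfAdjoint, star_eq_conjTranspose] using this

lemma abs_dotProduct_mulVec_le_of_transpose_eq {H R S : Matrix n n ℝ} (hH : Hᵀ = H)
    (hR : Rᵀ = R) (hS : IsUnit S.det) {v : n → ℝ} (hv : v ⬝ᵥ v ≤ 1) :
    |R *ᵥ v ⬝ᵥ H *ᵥ R *ᵥ v| ≤ ‖H * S‖ * ‖S⁻¹ * (R * R)‖ :=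
  calc |R *ᵥ v ⬝ᵥ H *ᵥ R *ᵥ v| = |v ⬝ᵥ (R * H * R) *ᵥ v| := by
        rw [← mulVec_mulVec, ← mulVec_mulVec, dotProduct_mulVec _ R, ← mulVec_transpose, hR]
    _ ≤ ‖R * H * R‖ := abs_dotProduct_mulVec_le_frobenius_norm _ hv
    _ ≤ ‖H * (R * R)‖ := frobenius_norm_mul_mul_le hH hR
    _ = ‖H * S * (S⁻¹ * (R * R))‖ := by rw [Matrix.mul_assoc, mul_nonsing_inv_cancel_left _ _ hS]
    _ ≤ ‖H * S‖ * ‖S⁻¹ * (R * R)‖ := frobenius_norm_mul _ _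

end Matrix

open Set in
theorem abs_sub_sub_deriv_le_of_abs_deriv2_le {f f' f'' : ℝ → ℝ} {K : ℝ}
    (hf : ∀ t ∈ Icc (0 : ℝ) 1, HasDerivWithinAt f (f' t) (Icc 0 1) t)
    (hf' : ∀ t ∈ Icc (0 : ℝ) 1, HasDerivWithinAt f' (f'' t) (Icc 0 1) t)
    (hK : ∀ t ∈ Icc (0 : ℝ) 1, |f'' t| ≤ K) :
    |f 1 - f 0 - f' 0| ≤ K / 2 := by
  have hslope : ∀ t ∈ Icc (0 : ℝ) 1, ‖f' t - f' 0‖ ≤ K * t := fun t ht => by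
    simpa [abs_of_nonneg ht.1] using
      (convex_Icc (0 : ℝ) 1).norm_image_sub_le_of_norm_hasDerivWithin_le hf' hK
        (left_mem_Icc.mpr zero_le_one) ht
  have hrem : ∀ t ∈ Icc (0 : ℝ) 1,
      HasDerivWithinAt (fun t => f t - f 0 - t * f' 0) (f' t - f' 0) (Icc 0 1) t :=
    fun t ht => ((hf t ht).sub_const _).sub (hasDerivAt_mul_const (f' 0)).hasDerivWithinAt
  have hB : ∀ t, HasDerivAt (fun t => K * t ^ 2 / 2) (K * t) t := fun t => by
    simpa [mul_comm, mul_div_assoc] using ((hasDerivAt_pow 2 t).const_mul K).div_const 2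
  simpa using image_norm_le_of_norm_deriv_right_le_deriv_boundary
    (fun t ht => (hrem t ht).continuousWithinAt)
    (fun t ht => (hrem t (Ico_subset_Icc_self ht)).mono_of_mem_nhdsWithin
      (Icc_mem_nhdsGE_of_mem ht))
    (by simp) hB (fun t ht => hslope t (Ico_subset_Icc_self ht)) (right_mem_Icc.mpr zero_le_one)

open Set in
theorem abs_sub_sub_fderiv_le_of_segment {E : Type*} [NormedAddCommGroup E] [NormedSpace ℝ E]
    {g : E → ℝ} (hg : ContDiff ℝ 2 g) {x y : E} {K : ℝ}
    (hK : ∀ z ∈ segment ℝ x y, |fderiv ℝ (fderiv ℝ g) z (y - x) (y - x)| ≤ K) :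
    |g y - g x - fderiv ℝ g x (y - x)| ≤ K / 2 := by
  have hg' : Differentiable ℝ (fderiv ℝ g) :=
    (hg.fderiv_right (m := 1) (by norm_num)).differentiable one_ne_zero
  have hline : ∀ t : ℝ, HasDerivAt (fun t : ℝ => x + t • (y - x)) (y - x) t := fun t => by
    simpa using ((hasDerivAt_id t).smul_const (y - x)).const_add x
  have hseg : ∀ t ∈ Icc (0 : ℝ) 1, x + t • (y - x) ∈ segment ℝ x y := fun t ht => by
    rw [segment_eq_image']; exact mem_image_of_mem _ ht
  simpa using abs_sub_sub_deriv_le_of_abs_deriv2_le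
    (f := fun t => g (x + t • (y - x)))
    (f' := fun t => fderiv ℝ g (x + t • (y - x)) (y - x))
    (f'' := fun t => fderiv ℝ (fderiv ℝ g) (x + t • (y - x)) (y - x) (y - x))
    (fun t _ => (((hg.differentiable (by norm_num)) _).hasFDerivAt.comp_hasDerivAt t
      (hline t)).hasDerivWithinAt)
    (fun t _ => (((hg' _).hasFDerivAt.comp_hasDerivAt t (hline t)).clm_apply
      (hasDerivAt_const t (y - x))).hasDerivWithinAt.congr_deriv (by simp))
    (fun t ht => hK _ (hseg t ht))

section Hessian

variable {m : ℕ} {g : (Fin m → ℝ) → ℝ} {x : Fin m → ℝ}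

lemma hess_eq_toMatrix₂' (h : DifferentiableAt ℝ (fderiv ℝ g) x) :
    hess g x = LinearMap.toMatrix₂' ℝ (fderiv ℝ (fderiv ℝ g) x).toLinearMap₁₂ := by
  ext i j
  simp [hess, fderiv_clm_apply h (differentiableAt_const _)]

lemma dotProduct_hess_mulVec (h : DifferentiableAt ℝ (fderiv ℝ g) x) (v : Fin m → ℝ) :
    v ⬝ᵥ hess g x *ᵥ v = fderiv ℝ (fderiv ℝ g) x v v := by
  rw [hess_eq_toMatrix₂' h, ← Matrix.toLinearMap₂'_apply', Matrix.toLinearMap₂'_toMatrix']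
  rfl

lemma hess_transpose (hg : ContDiffAt ℝ 2 g x) : (hess g x)ᵀ = hess g x := by
  have h : DifferentiableAt ℝ (fderiv ℝ g) x :=
    (hg.fderiv_right (m := 1) (by norm_num)).differentiableAt one_ne_zero
  ext i j
  simpa [hess_eq_toMatrix₂' h] using
    hg.isSymmSndFDerivAt (by simp) (Pi.single j 1) (Pi.single i 1)

end Hessian

lemma frob_eq_norm {p q : ℕ} (M : Matrix (Fin p) (Fin q) ℝ) : frob M = ‖M‖ := by
  rw [frob, ← Matrix.frobenius_norm_sq_eq_trace, Real.sqrt_sq (norm_nonneg _)]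

lemma ellipsoid_eq {m : ℕ} {Q : Matrix (Fin m) (Fin m) ℝ} (q : Fin m → ℝ) (hQ : Q.PosSemidef) :
    ellipsoid q hQ = {x | ∃ v : Fin m → ℝ, v ⬝ᵥ v ≤ 1 ∧ x = q + cfc Real.sqrt Q *ᵥ v} := by
  rw [hQ.1.cfc_eq]
  rfl

lemma center_mem_ellipsoid {m : ℕ} {Q : Matrix (Fin m) (Fin m) ℝ} (q : Fin m → ℝ)
    (hQ : Q.PosSemidef) : q ∈ ellipsoid q hQ :=
  ⟨0, by simp, by simp⟩

theorem stmt12 {m : ℕ} (g : (Fin m → ℝ) → ℝ) (hg : ContDiff ℝ 2 g)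
    (q : Fin m → ℝ) {Q : Matrix (Fin m) (Fin m) ℝ} (hQ : Q.PosSemidef)
    (S : Matrix (Fin m) (Fin m) ℝ) (hS : IsUnit S.det)
    (D : Set (Fin m → ℝ)) (hD : Convex ℝ D) (hsub : ellipsoid q hQ ⊆ D)
    (F : ℝ) (hF : ∀ y ∈ D, frob (hess g y * S) ≤ F) :
    ∀ y ∈ ellipsoid q hQ,
      |g y - g q - fderiv ℝ g q (y - q)| ≤ (1 / 2) * F * frob (S⁻¹ * Q) := by
  intro y hy
  have hseg : segment ℝ q y ⊆ D := hD.segment_subset (hsub (center_mem_ellipsoid q hQ)) (hsub hy)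
  have hg' : Differentiable ℝ (fderiv ℝ g) :=
    (hg.fderiv_right (m := 1) (by norm_num)).differentiable one_ne_zero
  rw [ellipsoid_eq] at hy
  obtain ⟨v, hv, rfl⟩ := hy
  refine (abs_sub_sub_fderiv_le_of_segment (K := F * frob (S⁻¹ * Q)) hg fun z hz => ?_).trans_eq
    (by ring)
  rw [add_sub_cancel_left, ← dotProduct_hess_mulVec (hg' z), frob_eq_norm]
  calc _ ≤ ‖hess g z * S‖ * ‖S⁻¹ * Q‖ := by
        simpa only [Matrix.cfc_sqrt_mul_self hQ] using
          Matrix.abs_dotProduct_mulVec_le_of_transpose_eq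
            (hess_transpose (hg.contDiffAt (x := z))) (Matrix.transpose_cfc Q Real.sqrt) hS hv
    _ ≤ F * ‖S⁻¹ * Q‖ :=
        mul_le_mul_of_nonneg_right (frob_eq_norm (hess g z * S) ▸ hF z (hseg hz)) (norm_nonneg _)
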